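/- arXiv:2202.00860 — 3 statements merged into one kernel-verified Lean document; each statement's English description precedes it below -/
import Mathlib

section
/- In a right-angled Coxeter group (W,S), two reduced words in the generators S represent the same element of W if and only if one can be transformed into the other by a finite sequence of swaps of adjacent commuting letters; moreover, any word representing the identity can be reduced to the empty word by a sequence of operations each of which either deletes two equal adjacent letters or swaps two adjacent commuting letters. -/
/-!
Let `r a b` say that `s a` and `s b` commute, and call a word swap-reduced if it contains no
factor `a u a` whose middle part `u` consists of letters different from `a` and commuting with
it. The letter `a` acts on words by cancelling the first `a` that can be swapped to the front,
or by prepending `a` if there is none. On swap classes of swap-reduced words these maps are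
well defined involutions, and those of commuting letters commute; in the right-angled case
these are all the Coxeter relations, so `W` acts on the swap classes. The element `π w` sends
the empty word to the class of the normal form of `w`, obtained by letting its letters act from
right to left. That normal form is `w` itself when `w` is reduced, and it is reached from `w` by
swaps and deletions of `a a`; so equal products give swap-equivalent reduced words, and
`π w = 1` gives the empty normal form.
-/

open CoxeterSystem

variable {B W : Type*} [Group W] {M : CoxeterMatrix B}

/-- One swap of two adjacent commuting letters in a word. -/
def SwapStep (cs : CoxeterSystem M W) (l l' : List B) : Prop :=
  ∃ (l₁ l₂ : List B) (a b : B),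
    cs.simple a * cs.simple b = cs.simple b * cs.simple a ∧
    l = l₁ ++ a :: b :: l₂ ∧ l' = l₁ ++ b :: a :: l₂

/-- One deletion of two equal adjacent letters in a word. -/
def DelStep (l l' : List B) : Prop :=
  ∃ (l₁ l₂ : List B) (a : B), l = l₁ ++ a :: a :: l₂ ∧ l' = l₁ ++ l₂

open Relation

namespace SwapWord

variable {r : B → B → Prop}

variable (r) in
def Swap (l l' : List B) : Prop :=
  ∃ (l₁ l₂ : List B) (a b : B),
    r a b ∧ l = l₁ ++ a :: b :: l₂ ∧ l' = l₁ ++ b :: a :: l₂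

variable (r) in
abbrev SwapEquiv : List B → List B → Prop := ReflTransGen (Swap r)

theorem Swap.symm [Std.Symm r] {l l' : List B} (h : Swap r l l') : Swap r l' l := by
  obtain ⟨l₁, l₂, a, b, hab, rfl, rfl⟩ := h
  exact ⟨l₁, l₂, b, a, Std.Symm.symm _ _ hab, rfl, rfl⟩

theorem Swap.cons {l l' : List B} (c : B) (h : Swap r l l') : Swap r (c :: l) (c :: l') := by
  obtain ⟨l₁, l₂, a, b, hab, rfl, rfl⟩ := h
  exact ⟨c :: l₁, l₂, a, b, hab, rfl, rfl⟩

theorem Swap.length_eq {l l' : List B} (h : Swap r l l') : l.length = l'.length := by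
  obtain ⟨l₁, l₂, a, b, -, rfl, rfl⟩ := h
  simp

namespace SwapEquiv

variable {l l' : List B}

theorem symm [Std.Symm r] (h : SwapEquiv r l l') : SwapEquiv r l' l := by
  induction h with
  | refl => exact .refl
  | tail _ hs ih => exact .head hs.symm ih

theorem cons (c : B) (h : SwapEquiv r l l') : SwapEquiv r (c :: l) (c :: l') :=
  ReflTransGen.lift (c :: ·) (fun _ _ hs => Swap.cons c hs) _ _ h

theorem length_eq (h : SwapEquiv r l l') : l.length = l'.length := by
  induction h with
  | refl => rfl
  | tail _ hs ih => exact ih.trans hs.length_eq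

end SwapEquiv

open Classical in
variable (r) in
noncomputable def leftQuotient (a : B) : List B → Option (List B)
  | [] => none
  | b :: w =>
    if b = a then some w else if r b a then (leftQuotient a w).map (b :: ·) else none

variable {a b c d : B} {t t' v w : List B}

@[simp]
theorem leftQuotient_nil : leftQuotient r a [] = none := rfl

@[simp]
theorem leftQuotient_cons_self : leftQuotient r a (a :: w) = some w := by
  simp [leftQuotient]

theorem leftQuotient_cons_of_ne (hba : b ≠ a) (h : r b a) :
    leftQuotient r a (b :: w) = (leftQuotient r a w).map (b :: ·) := by
  simp [leftQuotient, hba, h]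

theorem leftQuotient_cons_eq_some_iff :
    leftQuotient r a (b :: w) = some v ↔
      b = a ∧ v = w ∨ b ≠ a ∧ r b a ∧ ∃ v₀, leftQuotient r a w = some v₀ ∧ v = b :: v₀ := by
  by_cases hba : b = a
  · subst hba
    simp [eq_comm]
  · by_cases h : r b a
    · simp [leftQuotient_cons_of_ne hba h, hba, h, eq_comm]
    · simp [leftQuotient, hba, h]

theorem swapEquiv_of_leftQuotient_eq_some :
    ∀ {w v : List B}, leftQuotient r a w = some v → SwapEquiv r w (a :: v)
  | [], _, h => by simp at h
  | b :: w, v, h => by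
    rcases leftQuotient_cons_eq_some_iff.1 h with ⟨rfl, rfl⟩ | ⟨-, hba, v₀, hv₀, rfl⟩
    · exact .refl
    · exact ((swapEquiv_of_leftQuotient_eq_some hv₀).cons b).tail
        ⟨[], v₀, b, a, hba, rfl, rfl⟩

theorem exists_leftQuotient_cons_cons_eq_some [Std.Symm r] (hcd : r c d)
    (hv : leftQuotient r a (c :: d :: w) = some v) :
    ∃ v', leftQuotient r a (d :: c :: w) = some v' ∧ SwapEquiv r v v' := by
  rcases leftQuotient_cons_eq_some_iff.1 hv with ⟨rfl, rfl⟩ | ⟨hca, hc, v₁, hv₁, rfl⟩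
  · by_cases hdc : d = c
    · subst hdc
      exact ⟨_, leftQuotient_cons_self, .refl⟩
    · exact ⟨d :: w, by simp [leftQuotient_cons_of_ne hdc (Std.Symm.symm _ _ hcd)], .refl⟩
  · rcases leftQuotient_cons_eq_some_iff.1 hv₁ with ⟨rfl, rfl⟩ | ⟨hda, hd, x, hx, rfl⟩
    · exact ⟨_, leftQuotient_cons_self, .refl⟩
    · refine ⟨d :: c :: x, ?_, .single ⟨[], x, c, d, hcd, rfl, rfl⟩⟩
      simp [leftQuotient_cons_of_ne hda hd, leftQuotient_cons_of_ne hca hc, hx]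

theorem Swap.exists_leftQuotient_eq_some [Std.Symm r] (h : Swap r t t')
    (hv : leftQuotient r a t = some v) :
    ∃ v', leftQuotient r a t' = some v' ∧ SwapEquiv r v v' := by
  obtain ⟨l₁, l₂, c, d, hcd, rfl, rfl⟩ := h
  induction l₁ generalizing v with
  | nil => exact exists_leftQuotient_cons_cons_eq_some hcd hv
  | cons e l₁ ih =>
    rcases leftQuotient_cons_eq_some_iff.1 hv with ⟨rfl, rfl⟩ | ⟨hea, he, v₀, hv₀, rfl⟩
    · exact ⟨_, leftQuotient_cons_self, .single ⟨l₁, l₂, c, d, hcd, rfl, rfl⟩⟩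
    · obtain ⟨v₀', h', hv'⟩ := ih hv₀
      exact ⟨e :: v₀', by simp [leftQuotient_cons_of_ne hea he, h'], hv'.cons e⟩

theorem SwapEquiv.exists_leftQuotient_eq_some [Std.Symm r] (h : SwapEquiv r t t')
    (hv : leftQuotient r a t = some v) :
    ∃ v', leftQuotient r a t' = some v' ∧ SwapEquiv r v v' := by
  induction h with
  | refl => exact ⟨v, hv, .refl⟩
  | tail _ hs ih =>
    obtain ⟨v₁, h₁, hv₁⟩ := ih
    obtain ⟨v₂, h₂, hv₂⟩ := hs.exists_leftQuotient_eq_some h₁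
    exact ⟨v₂, h₂, hv₁.trans hv₂⟩

theorem SwapEquiv.leftQuotient_eq_none [Std.Symm r] (h : SwapEquiv r t t')
    (ht : leftQuotient r a t = none) : leftQuotient r a t' = none := by
  rcases ht' : leftQuotient r a t' with _ | v
  · rfl
  · obtain ⟨_, h', -⟩ := h.symm.exists_leftQuotient_eq_some ht'
    simp [ht] at h'

variable (r) in
noncomputable def leftMul (a : B) (w : List B) : List B :=
  (leftQuotient r a w).getD (a :: w)

theorem leftMul_of_leftQuotient_eq_some (h : leftQuotient r a w = some v) :
    leftMul r a w = v := by
  simp [leftMul, h]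

theorem leftMul_of_leftQuotient_eq_none (h : leftQuotient r a w = none) :
    leftMul r a w = a :: w := by
  simp [leftMul, h]

@[simp]
theorem leftMul_cons_self : leftMul r a (a :: w) = w := by
  simp [leftMul]

theorem SwapEquiv.leftMul [Std.Symm r] (h : SwapEquiv r t t') (a : B) :
    SwapEquiv r (leftMul r a t) (leftMul r a t') := by
  rcases ht : leftQuotient r a t with _ | v
  · rw [leftMul_of_leftQuotient_eq_none ht,
      leftMul_of_leftQuotient_eq_none (h.leftQuotient_eq_none ht)]
    exact h.cons a
  · obtain ⟨v', ht', hv⟩ := h.exists_leftQuotient_eq_some ht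
    rwa [leftMul_of_leftQuotient_eq_some ht, leftMul_of_leftQuotient_eq_some ht']

theorem swapEquiv_leftMul_cons [Std.Symm r] (hba : b ≠ a) (h : r b a) (w : List B) :
    SwapEquiv r (leftMul r a (b :: w)) (b :: leftMul r a w) := by
  simp only [leftMul, leftQuotient_cons_of_ne hba h]
  rcases leftQuotient r a w with _ | v
  · exact .single ⟨[], w, a, b, Std.Symm.symm _ _ h, rfl, rfl⟩
  · exact .refl

theorem swapEquiv_leftMul_leftMul_of_leftQuotient_eq_some [Std.Symm r] (hab : a ≠ b) (h : r a b)
    (hv : leftQuotient r a w = some v) :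
    SwapEquiv r (leftMul r a (leftMul r b w)) (leftMul r b (leftMul r a w)) := by
  have hw : SwapEquiv r w (a :: v) := swapEquiv_of_leftQuotient_eq_some hv
  rw [leftMul_of_leftQuotient_eq_some hv]
  calc SwapEquiv r (leftMul r a (leftMul r b w)) (leftMul r a (leftMul r b (a :: v))) :=
        (hw.leftMul b).leftMul a
    SwapEquiv r _ (leftMul r a (a :: leftMul r b v)) :=
        (swapEquiv_leftMul_cons hab h v).leftMul a
    _ = leftMul r b v := leftMul_cons_self

theorem swapEquiv_leftMul_leftMul_comm [Std.Symm r] (hab : a ≠ b) (h : r a b) (w : List B) :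
    SwapEquiv r (leftMul r a (leftMul r b w)) (leftMul r b (leftMul r a w)) := by
  rcases ha : leftQuotient r a w with _ | u
  · rcases hb : leftQuotient r b w with _ | v
    · have hba : r b a := Std.Symm.symm _ _ h
      have h₁ := swapEquiv_leftMul_cons hab.symm hba w
      have h₂ := swapEquiv_leftMul_cons hab h w
      rw [leftMul_of_leftQuotient_eq_none ha] at h₁ ⊢
      rw [leftMul_of_leftQuotient_eq_none hb] at h₂ ⊢
      exact h₁.trans (.head ⟨[], w, b, a, hba, rfl, rfl⟩ h₂.symm)
    · exact (swapEquiv_leftMul_leftMul_of_leftQuotient_eq_some hab.symm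
        (Std.Symm.symm _ _ h) hb).symm
  · exact swapEquiv_leftMul_leftMul_of_leftQuotient_eq_some hab h ha

variable (r) in
def IsSwapReduced : List B → Prop
  | [] => True
  | a :: w => leftQuotient r a w = none ∧ IsSwapReduced w

theorem IsSwapReduced.of_swap [Std.Symm r] (h : Swap r t t') (ht : IsSwapReduced r t) :
    IsSwapReduced r t' := by
  obtain ⟨l₁, l₂, c, d, hcd, rfl, rfl⟩ := h
  induction l₁ with
  | nil =>
    obtain ⟨hc, hd, hl₂⟩ := ht
    by_cases hdc : d = c
    · subst hdc
      exact ⟨hc, hd, hl₂⟩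
    refine ⟨?_, ?_, hl₂⟩
    · rw [leftQuotient_cons_of_ne (Ne.symm hdc) hcd, hd, Option.map_none]
    · rwa [leftQuotient_cons_of_ne hdc (Std.Symm.symm _ _ hcd), Option.map_eq_none_iff] at hc
  | cons e l₁ ih =>
    exact ⟨SwapEquiv.leftQuotient_eq_none (.single ⟨l₁, l₂, c, d, hcd, rfl, rfl⟩) ht.1, ih ht.2⟩

theorem SwapEquiv.isSwapReduced [Std.Symm r] (h : SwapEquiv r t t') (ht : IsSwapReduced r t) :
    IsSwapReduced r t' := by
  induction h with
  | refl => exact ht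
  | tail _ hs ih => exact ih.of_swap hs

theorem IsSwapReduced.leftMul [Std.Symm r] (hw : IsSwapReduced r w) (a : B) :
    IsSwapReduced r (SwapWord.leftMul r a w) := by
  rcases h : leftQuotient r a w with _ | v
  · rw [leftMul_of_leftQuotient_eq_none h]
    exact ⟨h, hw⟩
  · rw [leftMul_of_leftQuotient_eq_some h]
    exact ((swapEquiv_of_leftQuotient_eq_some h).isSwapReduced hw).2

theorem IsSwapReduced.swapEquiv_leftMul_leftMul [Std.Symm r] (hw : IsSwapReduced r w) (a : B) :
    SwapEquiv r (SwapWord.leftMul r a (SwapWord.leftMul r a w)) w := by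
  rcases h : leftQuotient r a w with _ | v
  · rw [leftMul_of_leftQuotient_eq_none h, leftMul_cons_self]
  · have hav := swapEquiv_of_leftQuotient_eq_some h
    rw [leftMul_of_leftQuotient_eq_some h,
      leftMul_of_leftQuotient_eq_none (hav.isSwapReduced hw).1]
    exact hav.symm

variable (r) in
def reducedSwapSetoid [Std.Symm r] : Setoid {w : List B // IsSwapReduced r w} where
  r u v := SwapEquiv r u.1 v.1
  iseqv := ⟨fun _ => .refl, SwapEquiv.symm, ReflTransGen.trans⟩

variable (r) in
abbrev ReducedTrace [Std.Symm r] : Type _ := Quotient (reducedSwapSetoid r)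

variable (r) in
noncomputable def leftMulPerm [Std.Symm r] (a : B) : Equiv.Perm (ReducedTrace r) :=
  Function.Involutive.toPerm
    (Quotient.map (fun w => ⟨leftMul r a w.1, w.2.leftMul a⟩) fun _ _ h => h.leftMul a)
    fun q => q.inductionOn fun w => Quotient.sound (w.2.swapEquiv_leftMul_leftMul a)

theorem leftMulPerm_mul_self [Std.Symm r] (a : B) : leftMulPerm r a * leftMulPerm r a = 1 :=
  Equiv.ext fun q => (leftMulPerm r a).left_inv q

theorem commute_leftMulPerm [Std.Symm r] (hab : a ≠ b) (h : r a b) :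
    Commute (leftMulPerm r a) (leftMulPerm r b) :=
  Equiv.ext fun q =>
    q.inductionOn fun w => Quotient.sound (swapEquiv_leftMul_leftMul_comm hab h w.1)

variable (r) in
noncomputable def normalForm (w : List B) : List B :=
  w.foldr (leftMul r) []

theorem normalForm_cons (a : B) (w : List B) :
    normalForm r (a :: w) = leftMul r a (normalForm r w) :=
  rfl

theorem isSwapReduced_normalForm [Std.Symm r] (w : List B) : IsSwapReduced r (normalForm r w) := by
  induction w with
  | nil => trivial
  | cons a w ih => exact ih.leftMul a

theorem reflTransGen_swap_or_delStep_normalForm (w : List B) :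
    ReflTransGen (fun l l' => Swap r l l' ∨ DelStep l l') w (normalForm r w) := by
  induction w with
  | nil => exact .refl
  | cons a w ih =>
    have hcons : ReflTransGen (fun l l' => Swap r l l' ∨ DelStep l l') (a :: w)
        (a :: normalForm r w) := by
      refine ReflTransGen.lift (a :: ·) (fun l l' hs => ?_) _ _ ih
      rcases hs with hs | ⟨l₁, l₂, b, rfl, rfl⟩
      · exact .inl (hs.cons a)
      · exact .inr ⟨a :: l₁, l₂, b, rfl, rfl⟩
    refine hcons.trans ?_
    rw [normalForm_cons]
    rcases h : leftQuotient r a (normalForm r w) with _ | v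
    · rw [leftMul_of_leftQuotient_eq_none h]
    · rw [leftMul_of_leftQuotient_eq_some h]
      refine ReflTransGen.tail ?_ (.inr ⟨[], v, a, rfl, rfl⟩)
      exact ReflTransGen.mono (fun _ _ => .inl) _ _ ((swapEquiv_of_leftQuotient_eq_some h).cons a)

end SwapWord

namespace CoxeterSystem

open SwapWord

variable (cs : CoxeterSystem M W) {w w' : List B}

abbrev SimpleCommute (i j : B) : Prop := Commute (cs.simple i) (cs.simple j)

instance : Std.Symm cs.SimpleCommute := ⟨fun _ _ h => h.symm⟩

theorem swapStep_eq_swap : SwapStep cs = Swap cs.SimpleCommute := rfl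

theorem wordProd_eq_of_swap (h : Swap cs.SimpleCommute w w') :
    cs.wordProd w = cs.wordProd w' := by
  obtain ⟨l₁, l₂, a, b, hab, rfl, rfl⟩ := h
  simp only [wordProd_append, wordProd_cons, ← mul_assoc, hab.eq]

theorem wordProd_eq_of_swapEquiv (h : SwapEquiv cs.SimpleCommute w w') :
    cs.wordProd w = cs.wordProd w' := by
  induction h with
  | refl => rfl
  | tail _ hs ih => exact ih.trans (cs.wordProd_eq_of_swap hs)

theorem wordProd_leftMul (a : B) (w : List B) :
    cs.wordProd (leftMul cs.SimpleCommute a w) = cs.simple a * cs.wordProd w := by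
  rcases h : leftQuotient cs.SimpleCommute a w with _ | v
  · rw [leftMul_of_leftQuotient_eq_none h, wordProd_cons]
  · rw [leftMul_of_leftQuotient_eq_some h,
      cs.wordProd_eq_of_swapEquiv (swapEquiv_of_leftQuotient_eq_some h), wordProd_cons,
      simple_mul_simple_cancel_left]

theorem normalForm_eq_self_of_isReduced (hw : cs.IsReduced w) :
    normalForm cs.SimpleCommute w = w := by
  induction w with
  | nil => rfl
  | cons a w ih =>
    rw [normalForm_cons, ih (by simpa using hw.drop 1)]
    rcases h : leftQuotient cs.SimpleCommute a w with _ | v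
    · exact leftMul_of_leftQuotient_eq_none h
    · have hprod : cs.wordProd v = cs.wordProd (a :: w) := by
        rw [← leftMul_of_leftQuotient_eq_some h, wordProd_leftMul, wordProd_cons]
      have hlen := (swapEquiv_of_leftQuotient_eq_some h).length_eq
      have hle := cs.length_wordProd_le v
      rw [hprod, hw] at hle
      simp only [List.length_cons] at hle hlen
      omega

theorem commute_simple_of_eq_two {i j : B} (h : M i j = 2) :
    Commute (cs.simple i) (cs.simple j) := by
  have hij := cs.simple_mul_simple_pow i j
  rw [h, sq, mul_eq_one_iff_eq_inv, mul_inv_rev, inv_simple, inv_simple] at hij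
  exact hij

theorem isLiftable_leftMulPerm (hra : ∀ i j : B, i ≠ j → M i j = 2 ∨ M i j = 0) :
    M.IsLiftable (leftMulPerm cs.SimpleCommute) := by
  intro i j
  by_cases hij : i = j
  · subst hij
    rw [M.diagonal, pow_one, leftMulPerm_mul_self]
  · rcases hra i j hij with h | h
    · rw [h, (commute_leftMulPerm hij (cs.commute_simple_of_eq_two h)).mul_pow, sq, sq,
        leftMulPerm_mul_self, leftMulPerm_mul_self, one_mul]
    · rw [h, pow_zero]

noncomputable def traceAction (hra : ∀ i j : B, i ≠ j → M i j = 2 ∨ M i j = 0) :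
    W →* Equiv.Perm (ReducedTrace cs.SimpleCommute) :=
  cs.lift ⟨_, cs.isLiftable_leftMulPerm hra⟩

theorem traceAction_wordProd (hra : ∀ i j : B, i ≠ j → M i j = 2 ∨ M i j = 0) (w : List B) :
    cs.traceAction hra (cs.wordProd w) ⟦⟨[], trivial⟩⟧ =
      ⟦⟨normalForm cs.SimpleCommute w, isSwapReduced_normalForm w⟩⟧ := by
  induction w with
  | nil => rw [wordProd_nil, map_one]; rfl
  | cons a w ih =>
    rw [wordProd_cons, map_mul, Equiv.Perm.mul_apply, ih, traceAction, lift_apply_simple]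
    rfl

theorem swapEquiv_normalForm_of_wordProd_eq (hra : ∀ i j : B, i ≠ j → M i j = 2 ∨ M i j = 0)
    (h : cs.wordProd w = cs.wordProd w') :
    SwapEquiv cs.SimpleCommute (normalForm cs.SimpleCommute w)
      (normalForm cs.SimpleCommute w') := by
  have hw := cs.traceAction_wordProd hra w
  rw [h, cs.traceAction_wordProd hra w'] at hw
  exact Quotient.exact hw.symm

end CoxeterSystem

open SwapWord in
/-- in a right-angled Coxeter system, two reduced words represent the same
element iff they differ by a sequence of swaps of adjacent commuting letters; and any word
representing the identity reduces to the empty word by deletions of equal adjacent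
letters and swaps of adjacent commuting letters. -/
theorem right_angled_word_property (cs : CoxeterSystem M W)
    (hra : ∀ i j : B, i ≠ j → M i j = 2 ∨ M i j = 0) :
    (∀ w w' : List B, cs.IsReduced w → cs.IsReduced w' →
      (cs.wordProd w = cs.wordProd w' ↔ Relation.ReflTransGen (SwapStep cs) w w')) ∧
    (∀ w : List B, cs.wordProd w = 1 →
      Relation.ReflTransGen (fun l l' => SwapStep cs l l' ∨ DelStep l l') w []) := by
  rw [swapStep_eq_swap]
  refine ⟨fun w w' hw hw' => ⟨fun h => ?_, cs.wordProd_eq_of_swapEquiv⟩, fun w h => ?_⟩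
  · have hnf := cs.swapEquiv_normalForm_of_wordProd_eq hra h
    rwa [cs.normalForm_eq_self_of_isReduced hw, cs.normalForm_eq_self_of_isReduced hw'] at hnf
  · have hnf := cs.swapEquiv_normalForm_of_wordProd_eq hra (h.trans cs.wordProd_nil.symm)
    have hnil : normalForm cs.SimpleCommute w = [] := List.eq_nil_of_length_eq_zero hnf.length_eq
    simpa only [hnil] using reflTransGen_swap_or_delStep_normalForm (r := cs.SimpleCommute) w
end

section
/- Let (W,S) be a Coxeter system, π : W → GL(E) the Tits representation (t = 1), and π' the permutation representation of Aut(W,S) on the basis {ε_s}. Then the representation Π of W ⋊ Aut(W,S) given by Π(w·g) = π(w)π'(g) is faithful. -/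
open CoxeterSystem

variable {I : Type*}

/-- The entries of the bilinear form `B_t`: `-cos (π / m s v)` when `m s v < ∞`, and `-t`
when `m s v = ∞` (recall that a Coxeter matrix records `∞` as `0`). -/
noncomputable def bEnt (M : CoxeterMatrix I) (t : ℝ) (s v : I) : ℝ :=
  if M s v = 0 then -t else -Real.cos (Real.pi / (M s v))

/-- The symmetric bilinear form `B_t` on `E = ℝ^S`, with `B_t (ε_s, ε_v)` given by
`bEnt M t s v`. -/
noncomputable def Bform (M : CoxeterMatrix I) (t : ℝ) (x y : I →₀ ℝ) : ℝ :=
  x.sum fun s a => y.sum fun v b => a * b * bEnt M t s v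

/-- The reflection `σ_s : x ↦ x - 2 B_t(x, ε_s) ε_s`. -/
noncomputable def reflMap (M : CoxeterMatrix I) (t : ℝ) (s : I) (x : I →₀ ℝ) : I →₀ ℝ :=
  x - (2 * Bform M t x (Finsupp.single s 1)) • Finsupp.single s 1

/-! ### Auxiliary lemmas about the bilinear form -/

lemma bEnt_diag (M : CoxeterMatrix I) (t : ℝ) (s : I) : bEnt M t s s = 1 := by
  unfold bEnt
  rw [M.diagonal s]
  norm_num [Real.cos_pi]

lemma bEnt_symm (M : CoxeterMatrix I) (t : ℝ) (s v : I) : bEnt M t s v = bEnt M t v s := by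
  unfold bEnt
  rw [M.symmetric s v]

lemma Bform_apply_single (M : CoxeterMatrix I) (t : ℝ) (x : I →₀ ℝ) (u : I) :
    Bform M t x (Finsupp.single u 1) = x.sum fun s a => a * bEnt M t s u := by
  unfold Bform
  refine Finsupp.sum_congr fun s _ => ?_
  rw [Finsupp.sum_single_index (by ring)]
  ring

lemma Bform_two (M : CoxeterMatrix I) (t : ℝ) (s s' u : I) (a b : ℝ) :
    Bform M t (a • Finsupp.single s 1 + b • Finsupp.single s' 1) (Finsupp.single u 1)
      = a * bEnt M t s u + b * bEnt M t s' u := by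
  rw [Bform_apply_single, Finsupp.smul_single, Finsupp.smul_single, smul_eq_mul, smul_eq_mul,
    mul_one, mul_one, Finsupp.sum_add_index' (fun _ => by ring) (fun _ _ _ => by ring),
    Finsupp.sum_single_index (by ring), Finsupp.sum_single_index (by ring)]

lemma reflMap_left (M : CoxeterMatrix I) (s s' : I) (a b : ℝ) :
    reflMap M 1 s (a • Finsupp.single s 1 + b • Finsupp.single s' 1)
      = (-a - 2 * b * bEnt M 1 s s') • Finsupp.single s 1 + b • Finsupp.single s' 1 := by
  rw [reflMap, Bform_two, bEnt_diag, bEnt_symm M 1 s' s]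
  module

lemma reflMap_right (M : CoxeterMatrix I) (s s' : I) (a b : ℝ) :
    reflMap M 1 s' (a • Finsupp.single s 1 + b • Finsupp.single s' 1)
      = a • Finsupp.single s 1 + (-b - 2 * a * bEnt M 1 s s') • Finsupp.single s' 1 := by
  rw [reflMap, Bform_two, bEnt_diag]
  module

/-! ### Dihedral coefficients -/

/-- The coefficients appearing when an alternating word acts on a simple root. -/
noncomputable def dcoef (m k : ℕ) : ℝ :=
  if m = 0 then (k : ℝ) else Real.sin (k * (Real.pi / m)) / Real.sin (Real.pi / m)

lemma dcoef_zero (m : ℕ) : dcoef m 0 = 0 := by simp [dcoef]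

lemma dcoef_one {m : ℕ} (hm : m ≠ 1) : dcoef m 1 = 1 := by
  unfold dcoef
  split
  · norm_num
  · rename_i h0
    have hm2 : 2 ≤ m := by omega
    have hθpos : 0 < Real.pi / m := by
      apply div_pos Real.pi_pos
      exact_mod_cast Nat.pos_of_ne_zero h0
    have hθlt : Real.pi / m < Real.pi := by
      apply div_lt_self Real.pi_pos
      exact_mod_cast hm2
    have hs : 0 < Real.sin (Real.pi / m) := Real.sin_pos_of_pos_of_lt_pi hθpos hθlt
    rw [Nat.cast_one, one_mul]
    exact div_self (ne_of_gt hs)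

lemma dcoef_nonneg {m k : ℕ} (hk : m = 0 ∨ k ≤ m) : 0 ≤ dcoef m k := by
  unfold dcoef
  split
  · positivity
  · rename_i h0
    have hk' : k ≤ m := hk.resolve_left h0
    have hm0 : 0 < (m : ℝ) := by exact_mod_cast Nat.pos_of_ne_zero h0
    have hθ : 0 ≤ Real.pi / m := le_of_lt (div_pos Real.pi_pos hm0)
    apply div_nonneg
    · apply Real.sin_nonneg_of_nonneg_of_le_pi
      · positivity
      · calc (k : ℝ) * (Real.pi / m) ≤ m * (Real.pi / m) := by
              apply mul_le_mul_of_nonneg_right _ hθ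
              exact_mod_cast hk'
          _ = Real.pi := by field_simp
    · apply Real.sin_nonneg_of_nonneg_of_le_pi hθ
      apply div_le_self Real.pi_pos.le
      exact_mod_cast Nat.one_le_iff_ne_zero.mpr h0

lemma dcoef_rec (m k : ℕ) :
    2 * (if m = 0 then (1:ℝ) else Real.cos (Real.pi / m)) * dcoef m (k+1) - dcoef m k
      = dcoef m (k+2) := by
  unfold dcoef
  split
  · push_cast; ring
  · set θ := Real.pi / m with hθ
    have h : Real.sin (((k:ℝ)+2) * θ) =
        2 * Real.cos θ * Real.sin (((k:ℝ)+1) * θ) - Real.sin ((k:ℝ) * θ) := by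
      have e1 : ((k:ℝ)+2) * θ = (((k:ℝ)+1) * θ) + θ := by ring
      have e2 : (k:ℝ) * θ = (((k:ℝ)+1) * θ) - θ := by ring
      rw [e1, e2, Real.sin_add, Real.sin_sub]; ring
    push_cast
    rw [h]; ring

lemma bEnt_one (M : CoxeterMatrix I) (s s' : I) :
    bEnt M 1 s s' = -(if M s s' = 0 then (1:ℝ) else Real.cos (Real.pi / (M s s'))) := by
  unfold bEnt
  split <;> rfl

/-! ### The dihedral positivity lemma -/

section Rep

variable {W : Type*} [Group W] (M : CoxeterMatrix I) (cs : CoxeterSystem M W)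
  (pr : W →* Module.End ℝ (I →₀ ℝ))

lemma dihedral_formula (hpr : ∀ (s : I) (x : I →₀ ℝ), pr (cs.simple s) x = reflMap M 1 s x)
    (s s' : I) (hss : M s s' ≠ 1) (k : ℕ) :
    pr (cs.wordProd (alternatingWord s s' k)) (Finsupp.single s 1)
      = (if Even k then dcoef (M s s') (k+1) else dcoef (M s s') k) • Finsupp.single s 1
        + (if Even k then dcoef (M s s') k else dcoef (M s s') (k+1)) • Finsupp.single s' 1 := by
  induction k with
  | zero =>
      simp only [alternatingWord, wordProd_nil, map_one, Module.End.one_apply, if_pos Even.zero,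
        dcoef_zero, dcoef_one hss, zero_smul, one_smul, add_zero]
  | succ k ih =>
      rw [alternatingWord_succ', wordProd_cons, map_mul, Module.End.mul_apply, ih]
      by_cases hk : Even k
      · rw [if_pos hk]
        simp only [if_pos hk] at *
        rw [hpr, reflMap_right]
        have hrec := dcoef_rec (M s s') k
        rw [bEnt_one]
        have hodd : ¬ Even (k+1) := by simp [Nat.even_add_one, hk]
        rw [if_neg hodd, if_neg hodd]
        congr 1
        congr 1
        linarith
      · rw [if_neg hk]
        simp only [if_neg hk] at *
        rw [hpr, reflMap_left]
        have hrec := dcoef_rec (M s s') k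
        rw [bEnt_one]
        have heven : Even (k+1) := Nat.even_add_one.mpr hk
        rw [if_pos heven, if_pos heven]
        congr 1
        congr 1
        linarith

lemma dihedral_pos (hpr : ∀ (s : I) (x : I →₀ ℝ), pr (cs.simple s) x = reflMap M 1 s x)
    (s s' : I) (hss : M s s' ≠ 1) (k : ℕ) (hk : M s s' = 0 ∨ k + 1 ≤ M s s') :
    ∃ a b : ℝ, 0 ≤ a ∧ 0 ≤ b ∧
      pr (cs.wordProd (alternatingWord s s' k)) (Finsupp.single s 1)
        = a • Finsupp.single s 1 + b • Finsupp.single s' 1 := by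
  refine ⟨_, _, ?_, ?_, dihedral_formula M cs pr hpr s s' hss k⟩ <;>
    · split <;> apply dcoef_nonneg <;> omega

/-! ### The key positivity theorem: if `ℓ(ws) > ℓ(w)` then `π(w) ε_s ≥ 0` coordinatewise. -/

theorem tits_pos (hpr : ∀ (s : I) (x : I →₀ ℝ), pr (cs.simple s) x = reflMap M 1 s x) :
    ∀ (n : ℕ) (w : W) (s : I), cs.length w = n →
      cs.length w < cs.length (w * cs.simple s) →
      ∀ i, 0 ≤ (pr w (Finsupp.single s 1)) i := by
  intro n
  induction n using Nat.strong_induction_on with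
  | _ n IH =>
  intro w s hn hws i
  classical
  rcases eq_or_ne w 1 with rfl | hw
  · rw [map_one, Module.End.one_apply, Finsupp.single_apply]
    split <;> norm_num
  · obtain ⟨s', hd⟩ := cs.exists_rightDescent_of_ne_one hw
    have hss : s ≠ s' := by
      rintro rfl
      exact absurd hd (lt_asymm hws)
    have hm1 : M s s' ≠ 1 := M.off_diagonal s s' hss
    classical
    set P : ℕ → Prop :=
      fun j => cs.length (w * (cs.wordProd (alternatingWord s s' j))⁻¹) + j = cs.length w
      with hPdef
    have hP1 : P 1 := by
      have h1 : alternatingWord s s' 1 = [s'] := rfl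
      show cs.length (w * (cs.wordProd (alternatingWord s s' 1))⁻¹) + 1 = cs.length w
      rw [h1, wordProd_cons, wordProd_nil, mul_one, cs.inv_simple]
      exact cs.isRightDescent_iff.mp hd
    have hlw : 1 ≤ cs.length w := by
      have := (cs.length_eq_zero_iff (w := w)).not.mpr hw
      omega
    obtain ⟨k, hkdef⟩ : ∃ k, Nat.findGreatest P (cs.length w) = k := ⟨_, rfl⟩
    have hPk : P k := hkdef ▸ Nat.findGreatest_spec hlw hP1
    have hk1 : 1 ≤ k := hkdef ▸ Nat.le_findGreatest hlw hP1
    set u := cs.wordProd (alternatingWord s s' k) with hu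
    set v := w * u⁻¹ with hv
    have hvw : v * u = w := by rw [hv]; group
    have hlv : cs.length v + k = cs.length w := hPk
    have hnotP : ¬ P (k+1) := by
      intro h
      have hle : k + 1 ≤ cs.length w := by
        have : cs.length (w * (cs.wordProd (alternatingWord s s' (k+1)))⁻¹) + (k+1)
            = cs.length w := h
        omega
      exact Nat.findGreatest_is_greatest (hkdef ▸ Nat.lt_succ_self k) hle h
    -- Claim 1: both `s` and `s'` increase the length of `v`
    have claim : ∀ x : I, x = s ∨ x = s' → cs.length v < cs.length (v * cs.simple x) := by
      intro x hx
      by_contra hcon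
      have hxd : cs.length (v * cs.simple x) + 1 = cs.length v := by
        rcases cs.length_mul_simple v x with h | h <;> omega
      by_cases hhead : x = (if Even k then s' else s)
      · -- case A: `σ_x * u` is the next alternating word, contradicting maximality
        have hA : cs.simple x * u = cs.wordProd (alternatingWord s s' (k+1)) := by
          rw [alternatingWord_succ', wordProd_cons, hhead, hu]
        apply hnotP
        show cs.length (w * (cs.wordProd (alternatingWord s s' (k+1)))⁻¹) + (k+1) = cs.length w
        have heq : w * (cs.wordProd (alternatingWord s s' (k+1)))⁻¹ = v * cs.simple x := by
          rw [← hA, mul_inv_rev, cs.inv_simple, ← mul_assoc, ← hv]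
        rw [heq]
        omega
      · -- case B: `σ_x` cancels the first letter of `u`, contradicting the length formula
        obtain ⟨k', rfl⟩ : ∃ k', k = k' + 1 := ⟨k - 1, by omega⟩
        have hB : u = cs.simple x * cs.wordProd (alternatingWord s s' k') := by
          rw [hu, alternatingWord_succ', wordProd_cons]
          congr 2
          rcases hx with rfl | rfl <;>
            rcases Nat.even_or_odd k' with hpar | hpar <;>
            simp_all [Nat.even_add_one, parity_simps]
        have hcomp : w = (v * cs.simple x) * cs.wordProd (alternatingWord s s' k') := by
          rw [← hvw, hB]
          group
        have hlen : cs.length w ≤ cs.length (v * cs.simple x) + k' := by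
          rw [hcomp]
          calc cs.length ((v * cs.simple x) * cs.wordProd (alternatingWord s s' k'))
              ≤ cs.length (v * cs.simple x) + cs.length (cs.wordProd (alternatingWord s s' k')) :=
                cs.length_mul_le _ _
            _ ≤ cs.length (v * cs.simple x) + k' := by
                have := cs.length_wordProd_le (alternatingWord s s' k')
                rw [length_alternatingWord] at this
                omega
        omega
    -- Claim 2: `k + 1 ≤ M s s'` unless `M s s' = 0`
    have hkm : M s s' = 0 ∨ k + 1 ≤ M s s' := by
      by_cases hm0 : M s s' = 0
      · exact Or.inl hm0
      · right
        by_contra hcon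
        have hku : cs.length u = k := by
          have h1 := cs.length_mul_le v u
          rw [hvw] at h1
          have h2 := cs.length_wordProd_le (alternatingWord s s' k)
          rw [length_alternatingWord] at h2
          rw [← hu] at h2
          omega
        rcases Nat.lt_or_ge (M s s') k with hlt | hge
        · refine cs.not_isReduced_alternatingWord s s' hm0 hlt ?_
          show cs.length (cs.wordProd (alternatingWord s s' k)) = (alternatingWord s s' k).length
          rw [length_alternatingWord, ← hu, hku]
        · have hkm' : k = M s s' := by omega
          obtain ⟨m', hm'⟩ : ∃ m', M s s' = m' + 1 := ⟨M s s' - 1, by omega⟩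
          have hbraid : cs.wordProd (alternatingWord s s' (M s s'))
              = cs.wordProd (alternatingWord s' s (M s s')) := by
            have := cs.wordProd_braidWord_eq s s'
            unfold CoxeterSystem.braidWord at this
            rwa [M.symmetric s' s] at this
          have hcancel : u * cs.simple s = cs.wordProd (alternatingWord s s' m') := by
            rw [hu, hkm', hbraid, hm', alternatingWord_succ, wordProd_concat,
              cs.simple_mul_simple_cancel_right]
          have hlen : cs.length (w * cs.simple s) ≤ cs.length v + m' := by
            have hcomp : w * cs.simple s = v * (u * cs.simple s) := by
              rw [← hvw]; group
            rw [hcomp, hcancel]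
            calc cs.length (v * cs.wordProd (alternatingWord s s' m'))
                ≤ cs.length v + cs.length (cs.wordProd (alternatingWord s s' m')) :=
                  cs.length_mul_le _ _
              _ ≤ cs.length v + m' := by
                  have := cs.length_wordProd_le (alternatingWord s s' m')
                  rw [length_alternatingWord] at this
                  omega
          omega
    -- Assemble using the dihedral positivity lemma and the induction hypothesis
    obtain ⟨a, b, ha, hb, hab⟩ := dihedral_pos M cs pr hpr s s' hm1 k hkm
    rw [← hu] at hab
    have hval : pr w (Finsupp.single s 1)
        = a • (pr v (Finsupp.single s 1)) + b • (pr v (Finsupp.single s' 1)) := by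
      rw [← hvw, map_mul, Module.End.mul_apply, hab, map_add, map_smul, map_smul]
    rw [hval, Finsupp.add_apply, Finsupp.smul_apply, Finsupp.smul_apply, smul_eq_mul, smul_eq_mul]
    have hlvn : cs.length v < n := by omega
    have p1 := IH (cs.length v) hlvn v s rfl (claim s (Or.inl rfl)) i
    have p2 := IH (cs.length v) hlvn v s' rfl (claim s' (Or.inr rfl)) i
    exact add_nonneg (mul_nonneg ha p1) (mul_nonneg hb p2)

end Rep

/-- for `t = 1` (the Tits representation), the representation
`Π(w·g) = π(w)π'(g)` of `W ⋊ Aut(W,S)` is faithful, where `Aut(W,S)` is realized as the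
group of permutations of the index set preserving the Coxeter matrix and `π'` permutes
the basis accordingly. -/
theorem semidirect_representation_faithful {W : Type*} [Group W] (M : CoxeterMatrix I)
    (cs : CoxeterSystem M W)
    (π : W →* Module.End ℝ (I →₀ ℝ))
    (hπ : ∀ (s : I) (x : I →₀ ℝ), π (cs.simple s) x = reflMap M 1 s x) :
    ∀ (w₁ w₂ : W) (e₁ e₂ : Equiv.Perm I),
      (∀ a b : I, M (e₁ a) (e₁ b) = M a b) → (∀ a b : I, M (e₂ a) (e₂ b) = M a b) →
      (∀ x : I →₀ ℝ, π w₁ (Finsupp.mapDomain e₁ x) = π w₂ (Finsupp.mapDomain e₂ x)) →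
      w₁ = w₂ ∧ e₁ = e₂ := by
  intro w₁ w₂ e₁ e₂ _ _ H
  classical
  have hinj : ∀ (g : W) {x y : I →₀ ℝ}, π g x = π g y → x = y := by
    intro g x y h
    have h2 := congrArg (π g⁻¹) h
    rwa [← Module.End.mul_apply, ← Module.End.mul_apply, ← map_mul, inv_mul_cancel, map_one,
      Module.End.one_apply, Module.End.one_apply] at h2
  have Hj : ∀ j : I, π w₁ (Finsupp.single (e₁ j) 1) = π w₂ (Finsupp.single (e₂ j) 1) := by
    intro j
    have := H (Finsupp.single j 1)
    rwa [Finsupp.mapDomain_single, Finsupp.mapDomain_single] at this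
  set w := w₂⁻¹ * w₁ with hw
  have Ht : ∀ t : I, π w (Finsupp.single t 1) = Finsupp.single (e₂ (e₁.symm t)) 1 := by
    intro t
    apply hinj w₂
    have h1 : π w₂ (π w (Finsupp.single t 1)) = π w₁ (Finsupp.single t 1) := by
      rw [← Module.End.mul_apply, ← map_mul, hw, mul_inv_cancel_left]
    rw [h1]
    have := Hj (e₁.symm t)
    rwa [Equiv.apply_symm_apply] at this
  have hw1 : w = 1 := by
    by_contra hne
    obtain ⟨s, hd⟩ := cs.exists_rightDescent_of_ne_one hne
    set w' := w * cs.simple s with hw'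
    have hlen : cs.length w' < cs.length (w' * cs.simple s) := by
      rw [hw', cs.simple_mul_simple_cancel_right]
      exact hd
    have hpos := tits_pos M cs π hπ (cs.length w') w' s rfl hlen
    have hXne : π w' (Finsupp.single s 1) ≠ 0 := by
      intro h0
      have h1 : (Finsupp.single s (1:ℝ)) = 0 := hinj w' (h0.trans (map_zero (π w')).symm)
      exact one_ne_zero (Finsupp.single_eq_zero.mp h1)
    obtain ⟨i, hi⟩ := Finsupp.ne_iff.mp hXne
    have hi' : (π w' (Finsupp.single s 1)) i ≠ 0 := by simpa using hi
    have hXi : 0 < (π w' (Finsupp.single s 1)) i := lt_of_le_of_ne (hpos i) (Ne.symm hi')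
    have hneg : π w (Finsupp.single s 1) = - π w' (Finsupp.single s 1) := by
      have hws : w = w' * cs.simple s := by rw [hw', cs.simple_mul_simple_cancel_right]
      rw [hws, map_mul, Module.End.mul_apply, hπ]
      have hrefl : reflMap M 1 s (Finsupp.single s (1:ℝ)) = - Finsupp.single s 1 := by
        rw [reflMap, Bform_apply_single, Finsupp.sum_single_index (by ring), bEnt_diag]
        module
      rw [hrefl, map_neg]
    have h2 := Ht s
    rw [hneg] at h2
    have h3 : -(π w' (Finsupp.single s 1)) i = Finsupp.single (e₂ (e₁.symm s)) (1:ℝ) i := by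
      rw [← Finsupp.neg_apply, h2]
    have h4 : (0:ℝ) ≤ Finsupp.single (e₂ (e₁.symm s)) (1:ℝ) i := by
      rw [Finsupp.single_apply]; split <;> norm_num
    linarith
  have h12 : w₁ = w₂ := by
    have : w₂⁻¹ * w₁ = 1 := hw1
    exact (inv_mul_eq_one.mp this).symm
  refine ⟨h12, ?_⟩
  ext j
  have := Hj j
  rw [h12] at this
  have hsingle := hinj w₂ this
  exact Finsupp.single_left_injective one_ne_zero hsingle
end

section
/- Let n ≥ 3 be odd and let CD_{2n} be the generalized cactus group of the dihedral Coxeter system I_2(n), generated by γ_a, γ_b, γ_{ab} with relations γ_a² = γ_b² = γ_{ab}² = 1, γ_{ab}γ_a γ_{ab} = γ_b and γ_{ab}γ_b γ_{ab} = γ_a (since conjugation by the longest element swaps a and b when n is odd). Then CD_{2n} is isomorphic to the infinite dihedral group D_∞. -/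
/-- The relators of the generalized cactus group `CD_{2n}` of the dihedral Coxeter system
`I₂(n)` for odd `n`: generators `γ_a, γ_b, γ_{ab}` (indexed `0, 1, 2`), with relations
`γ_a² = γ_b² = γ_{ab}² = 1`, `γ_{ab} γ_a γ_{ab} = γ_b` and `γ_{ab} γ_b γ_{ab} = γ_a`. -/
def dihedralCactusRelsOdd : Set (FreeGroup (Fin 3)) :=
  { .of 0 * .of 0, .of 1 * .of 1, .of 2 * .of 2,
    .of 2 * .of 0 * .of 2 * (.of 1)⁻¹,
    .of 2 * .of 1 * .of 2 * (.of 0)⁻¹ }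

/-!
The relation `γ_{ab} γ_a γ_{ab} = γ_b` eliminates `γ_b`, after which the remaining relations only
say that `γ_a` and `γ_{ab}` are involutions (`γ_{ab} γ_b γ_{ab} = γ_a` and `γ_b² = 1` become
consequences). So the group is the free product `ℤ/2 * ℤ/2`, i.e. `D_∞`: the involutions `γ_{ab}`
and `γ_a` go to the reflections `sr 0` and `sr 1`, whose product `γ_{ab} γ_a` is the
translation `r 1`.
-/

namespace DihedralGroup

variable {n : ℕ} {G : Type*} [Group G]

def zmodPowHom (g : G) (hg : g ^ n = 1) : ZMod n →+ Additive G :=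
  ZMod.lift n ⟨zmultiplesHom _ (Additive.ofMul g), by simp [← ofMul_pow, hg]⟩

theorem toMul_zmodPowHom_intCast (g : G) (hg : g ^ n = 1) (k : ℤ) :
    (zmodPowHom g hg k).toMul = g ^ k := by
  simp [zmodPowHom, ZMod.lift_coe]

theorem mul_toMul_zmodPowHom_mul {s g : G} (hs : s * s = 1) (hsg : s * g * s = g⁻¹)
    (hg : g ^ n = 1) (i : ZMod n) :
    s * (zmodPowHom g hg i).toMul * s = (zmodPowHom g hg i).toMul⁻¹ := by
  obtain ⟨k, rfl⟩ := ZMod.intCast_surjective i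
  have hconj := conj_zpow (a := s) (b := g) (i := k)
  rw [inv_eq_of_mul_eq_one_right hs, hsg, inv_zpow] at hconj
  rw [toMul_zmodPowHom_intCast, hconj]

theorem toMul_zmodPowHom_mul {s g : G} (hs : s * s = 1) (hsg : s * g * s = g⁻¹)
    (hg : g ^ n = 1) (i : ZMod n) :
    (zmodPowHom g hg i).toMul * s = s * (zmodPowHom g hg i).toMul⁻¹ := by
  rw [← mul_toMul_zmodPowHom_mul hs hsg, ← mul_assoc, ← mul_assoc, hs, one_mul]

def lift (s g : G) (hs : s * s = 1) (hsg : s * g * s = g⁻¹) (hg : g ^ n = 1) :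
    DihedralGroup n →* G where
  toFun
    | r i => (zmodPowHom g hg i).toMul
    | sr i => s * (zmodPowHom g hg i).toMul
  map_one' := by simp [← r_zero]
  map_mul' := by
    rintro (i | i) (j | j)
    · simp [r_mul_r]
    · simp [r_mul_sr, sub_eq_neg_add, ← mul_assoc, toMul_zmodPowHom_mul hs hsg hg]
    · simp [sr_mul_r, mul_assoc]
    · simp [sr_mul_sr, sub_eq_neg_add, ← mul_assoc, mul_toMul_zmodPowHom_mul hs hsg hg]

section lift

variable {s g : G} (hs : s * s = 1) (hsg : s * g * s = g⁻¹) (hg : g ^ n = 1)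

theorem lift_r (i : ZMod n) : lift s g hs hsg hg (r i) = (zmodPowHom g hg i).toMul := rfl

theorem lift_sr (i : ZMod n) : lift s g hs hsg hg (sr i) = s * (zmodPowHom g hg i).toMul := rfl

@[simp]
theorem lift_r_one : lift s g hs hsg hg (r 1) = g := by
  simpa [lift_r] using toMul_zmodPowHom_intCast g hg 1

@[simp]
theorem lift_sr_zero : lift s g hs hsg hg (sr 0) = s := by
  simp [lift_sr]

end lift

theorem hom_ext {φ ψ : DihedralGroup n →* G} (hr : φ (r 1) = ψ (r 1))
    (hsr : φ (sr 0) = ψ (sr 0)) : φ = ψ := by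
  have hr' (i : ZMod n) : φ (r i) = ψ (r i) := by
    obtain ⟨k, rfl⟩ := ZMod.intCast_surjective i
    rw [← r_one_zpow, map_zpow, map_zpow, hr]
  ext (i | i)
  · exact hr' i
  · rw [← zero_add i, ← sr_mul_r, map_mul, map_mul, hsr, hr']

end DihedralGroup

namespace DihedralCactusOdd

open DihedralGroup PresentedGroup

abbrev CD := PresentedGroup dihedralCactusRelsOdd

theorem of_zero_mul_self : (of 0 : CD) * of 0 = 1 :=
  one_of_mem (by simp [dihedralCactusRelsOdd])

theorem of_two_mul_self : (of 2 : CD) * of 2 = 1 :=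
  one_of_mem (by simp [dihedralCactusRelsOdd])

theorem of_two_mul_of_zero_mul_of_two : (of 2 : CD) * of 0 * of 2 = of 1 :=
  mk_eq_mk_of_mul_inv_mem (by simp [dihedralCactusRelsOdd])

theorem reflections_satisfy_rels : ∀ x ∈ dihedralCactusRelsOdd,
    FreeGroup.lift ![sr 1, sr (-1), sr 0] x = (1 : DihedralGroup 0) := by
  simp [dihedralCactusRelsOdd, sr_mul_sr, r_mul_sr, ← r_zero]

def toDihedral : CD →* DihedralGroup 0 := toGroup reflections_satisfy_rels

@[simp]
theorem toDihedral_of (x : Fin 3) : toDihedral (of x) = ![sr 1, sr (-1), sr 0] x :=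
  toGroup.of reflections_satisfy_rels

theorem of_two_mul_of_zero_conj : (of 2 : CD) * (of 2 * of 0) * of 2 = (of 2 * of 0)⁻¹ := by
  rw [← mul_assoc, of_two_mul_self, one_mul, mul_inv_rev,
    inv_eq_of_mul_eq_one_right of_zero_mul_self, inv_eq_of_mul_eq_one_right of_two_mul_self]

def ofDihedral : DihedralGroup 0 →* CD :=
  lift (of 2) (of 2 * of 0) of_two_mul_self of_two_mul_of_zero_conj (pow_zero _)

theorem ofDihedral_sr_zero : ofDihedral (sr 0) = of 2 :=
  lift_sr_zero ..

theorem ofDihedral_sr_one : ofDihedral (sr 1) = of 0 := by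
  rw [← zero_add 1, ← sr_mul_r, map_mul, ofDihedral, lift_sr_zero, lift_r_one, ← mul_assoc,
    of_two_mul_self, one_mul]

theorem ofDihedral_sr_neg_one : ofDihedral (sr (-1)) = of 1 := by
  rw [← zero_sub, ← r_mul_sr, map_mul, ofDihedral, lift_r_one, lift_sr_zero,
    of_two_mul_of_zero_mul_of_two]

theorem ofDihedral_comp_toDihedral : ofDihedral.comp toDihedral = .id CD := by
  refine PresentedGroup.ext fun x => ?_
  fin_cases x <;> simp [ofDihedral_sr_zero, ofDihedral_sr_one, ofDihedral_sr_neg_one]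

theorem toDihedral_comp_ofDihedral : toDihedral.comp ofDihedral = .id (DihedralGroup 0) :=
  hom_ext (by simp [ofDihedral, sr_mul_sr]) (by simp [ofDihedral])

def mulEquivDihedral : CD ≃* DihedralGroup 0 :=
  toDihedral.toMulEquiv ofDihedral ofDihedral_comp_toDihedral toDihedral_comp_ofDihedral

end DihedralCactusOdd

theorem dihedral_cactus_odd_general :
    Nonempty (PresentedGroup dihedralCactusRelsOdd ≃* DihedralGroup 0) :=
  ⟨DihedralCactusOdd.mulEquivDihedral⟩

/-- for odd `n ≥ 3`, the generalized cactus group `CD_{2n}` of the dihedral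
Coxeter system `I₂(n)` is isomorphic to the infinite dihedral group `D_∞`. -/
theorem dihedral_cactus_odd (n : ℕ) (hn : 3 ≤ n) (hodd : Odd n) :
    Nonempty (PresentedGroup dihedralCactusRelsOdd ≃* DihedralGroup 0) :=
  dihedral_cactus_odd_general
end
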